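/- In the free algebra of terms over atomic events with binary operations + (alternative composition) and · (sequential composition) satisfying A1: x+y = y+x, A2: (x+y)+z = x+(y+z), A3: x+x = x, A4: (x+y)·z = x·z + y·z, A5: (x·y)·z = x·(y·z), every closed term is provably equal to a basic term, where basic terms are generated by: atomic events are basic; e·t is basic for e atomic and t basic; t+s is basic for t, s basic. -/
import Mathlib


/-- Terms of BATC: atomic events, sequential composition `·`, and alternative
composition `+`. -/
inductive BTerm (E : Type*) where
  | atom : E → BTerm E
  | seq : BTerm E → BTerm E → BTerm E
  | alt : BTerm E → BTerm E → BTerm E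

/-- Provable equality in BATC: the axioms A1–A5 together with the rules of
equational logic (reflexivity, symmetry, transitivity, congruence). -/
inductive BatcEq {E : Type*} : BTerm E → BTerm E → Prop where
  | refl (t) : BatcEq t t
  | symm {s t} : BatcEq s t → BatcEq t s
  | trans {s t u} : BatcEq s t → BatcEq t u → BatcEq s u
  | seqCongr {a b c d} : BatcEq a b → BatcEq c d → BatcEq (BTerm.seq a c) (BTerm.seq b d)
  | altCongr {a b c d} : BatcEq a b → BatcEq c d → BatcEq (BTerm.alt a c) (BTerm.alt b d)
  | A1 (x y) : BatcEq (BTerm.alt x y) (BTerm.alt y x)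
  | A2 (x y z) : BatcEq (BTerm.alt (BTerm.alt x y) z) (BTerm.alt x (BTerm.alt y z))
  | A3 (x) : BatcEq (BTerm.alt x x) x
  | A4 (x y z) : BatcEq (BTerm.seq (BTerm.alt x y) z)
      (BTerm.alt (BTerm.seq x z) (BTerm.seq y z))
  | A5 (x y z) : BatcEq (BTerm.seq (BTerm.seq x y) z) (BTerm.seq x (BTerm.seq y z))

/-- Basic terms of BATC: atomic events; `e · t` with `e` atomic and `t` basic;
`t + s` with `t, s` basic. -/
inductive IsBasic {E : Type*} : BTerm E → Prop where
  | atom (e : E) : IsBasic (BTerm.atom e)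
  | seqAtom (e : E) {t} : IsBasic t → IsBasic (BTerm.seq (BTerm.atom e) t)
  | alt {t s} : IsBasic t → IsBasic s → IsBasic (BTerm.alt t s)


lemma seq_basic {E : Type*} {q r : BTerm E} (hq : IsBasic q) (hr : IsBasic r) :
    ∃ u : BTerm E, IsBasic u ∧ BatcEq (BTerm.seq q r) u := by
  induction hq with
  | atom e => exact ⟨_, IsBasic.seqAtom e hr, BatcEq.refl _⟩
  | seqAtom e ht ih =>
    obtain ⟨u, hu, he⟩ := ih
    exact ⟨_, IsBasic.seqAtom e hu,
      (BatcEq.A5 _ _ _).trans (BatcEq.seqCongr (BatcEq.refl _) he)⟩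
  | alt ht hs iht ihs =>
    obtain ⟨u, hu, he⟩ := iht
    obtain ⟨v, hv, he'⟩ := ihs
    exact ⟨_, IsBasic.alt hu hv, (BatcEq.A4 _ _ _).trans (BatcEq.altCongr he he')⟩

/-- Elimination theorem of BATC: every closed BATC term is provably equal to a
basic term. -/
theorem batc_elimination {E : Type*} (p : BTerm E) :
    ∃ q : BTerm E, IsBasic q ∧ BatcEq p q := by
  induction p with
  | atom e => exact ⟨_, IsBasic.atom e, BatcEq.refl _⟩
  | seq a b iha ihb =>
    obtain ⟨qa, ha, ea⟩ := iha
    obtain ⟨qb, hb, eb⟩ := ihb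
    obtain ⟨u, hu, he⟩ := seq_basic ha hb
    exact ⟨u, hu, (BatcEq.seqCongr ea eb).trans he⟩
  | alt a b iha ihb =>
    obtain ⟨qa, ha, ea⟩ := iha
    obtain ⟨qb, hb, eb⟩ := ihb
    exact ⟨_, IsBasic.alt ha hb, BatcEq.altCongr ea eb⟩
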